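/- Suppose the process is regular. If π is a deterministic policy, then its state-action frequency vector x_π is a basic feasible solution (a vertex) of the state-action frequency polytope P; conversely, if x is a basic feasible solution of P, then the corresponding regular policy π^x is deterministic. -/

import Mathlib

open Finset

/-- A finite-horizon MDP with `N` states, horizon `T` (epochs `0,…,T-1`, so `T ≥ 2` has at
least one decision epoch), action sets `Fin (k s)` for each state `s`, and transition
probabilities `p t s a j = p_t(j | s, a)` governing the move from epoch `t` to `t+1`,
together with a strictly positive initial distribution `α`. -/
structure MDP (N T : ℕ) (k : Fin N → ℕ) : Type where
  p : ℕ → (s : Fin N) → Fin (k s) → Fin N → ℝ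
  α : Fin N → ℝ
  p_nonneg : ∀ t s a j, 0 ≤ p t s a j
  p_sum : ∀ t s a, ∑ j, p t s a j = 1
  α_pos : ∀ s, 0 < α s
  α_sum : ∑ s, α s = 1

/-- A (randomized, Markov, non-stationary) policy: `q t s a` is the probability that
action `a` is chosen in state `s` at decision epoch `t`. -/
structure Policy (N : ℕ) (k : Fin N → ℕ) : Type where
  q : ℕ → (s : Fin N) → Fin (k s) → ℝ
  q_nonneg : ∀ t s a, 0 ≤ q t s a
  q_sum : ∀ t s, ∑ a, q t s a = 1

variable {N T : ℕ} {k : Fin N → ℕ}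

/-- `condProb M π j t s` is `P^π(S_t = s | S_0 = j)` (epochs indexed from 0). -/
def condProb (M : MDP N T k) (π : Policy N k) (j : Fin N) : ℕ → Fin N → ℝ
  | 0, s => if s = j then 1 else 0
  | t+1, s => ∑ s', ∑ a, condProb M π j t s' * π.q t s' a * M.p t s' a s

/-- The state-action frequency `x_{π,t}(s,a) = ∑_j α(j) P^π(S_t = s, A_t = a | S_0 = j)`
(epochs indexed from 0, so the decision epochs are `0,…,T-2`). -/
def xsa (M : MDP N T k) (π : Policy N k) (t : ℕ) (s : Fin N) (a : Fin (k s)) : ℝ :=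
  ∑ j, M.α j * condProb M π j t s * π.q t s a

/-- The terminal state frequency `x_{π,T}(s)` (terminal epoch is `T-1` in 0-based indexing). -/
def xT (M : MDP N T k) (π : Policy N k) (s : Fin N) : ℝ :=
  ∑ j, M.α j * condProb M π j (T-1) s

variable (TT : ℕ)

/-- The finite-dimensional space housing state-action frequency vectors for a horizon
`TT + 2` process: a component `x.1 t s a` for every decision epoch `t ∈ {0,…,TT}`, state
`s` and action `a`, and a terminal component `x.2 s` for every state `s`. -/
abbrev FreqSpace (N : ℕ) (k : Fin N → ℕ) (TT : ℕ) : Type :=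
  (Fin (TT+1) → (s : Fin N) → Fin (k s) → ℝ) × (Fin N → ℝ)

/-- Membership in the state-action frequency polytope `P`: nonnegativity together with the
initial condition (a), flow conservation (b), and the terminal condition (c). -/
def inP {N : ℕ} {k : Fin N → ℕ} {TT : ℕ} (M : MDP N (TT+2) k)
    (x : FreqSpace N k TT) : Prop :=
  (∀ t s a, 0 ≤ x.1 t s a) ∧ (∀ s, 0 ≤ x.2 s) ∧
  (∀ j, ∑ a, x.1 0 j a = M.α j) ∧
  (∀ (t : Fin TT) (j : Fin N),
    ∑ a, x.1 t.succ j a = ∑ s, ∑ a, M.p (t : ℕ) s a j * x.1 t.castSucc s a) ∧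
  (∀ j, x.2 j = ∑ s, ∑ a, M.p TT s a j * x.1 (Fin.last TT) s a)

/-- The state-action frequency polytope `P`. -/
def Pset {N : ℕ} {k : Fin N → ℕ} {TT : ℕ} (M : MDP N (TT+2) k) :
    Set (FreqSpace N k TT) :=
  {x | inP M x}

/-- The state-action frequency vector `x_π` of a policy, as a point of `FreqSpace`. -/
def xvec {N : ℕ} {k : Fin N → ℕ} {TT : ℕ} (M : MDP N (TT+2) k) (π : Policy N k) :
    FreqSpace N k TT :=
  (fun t s a => xsa M π (t : ℕ) s a, fun s => xT M π s)

/-- The process is regular when every policy can reach every state at every epoch. -/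
def RegularProcess {N : ℕ} {k : Fin N → ℕ} {TT : ℕ} (M : MDP N (TT+2) k) : Prop :=
  ∀ (π : Policy N k) (t : ℕ) (s : Fin N), t ≤ TT + 1 → ∃ j, 0 < condProb M π j t s

/-- A policy is deterministic (up to the horizon) if at every decision epoch and state it
puts probability one on a single action. -/
def Deterministic {N : ℕ} (k : Fin N → ℕ) (TT : ℕ) (π : Policy N k) : Prop :=
  ∀ t s, t ≤ TT → ∃ a, π.q t s a = 1

/-- A policy is regular if at every decision epoch and every state unreachable there, it
puts full mass on the first action. -/
def RegularPol {N : ℕ} {k : Fin N → ℕ} {TT : ℕ} (M : MDP N (TT+2) k)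
    (hk : ∀ s, 1 ≤ k s) (π : Policy N k) : Prop :=
  ∀ t s, t ≤ TT → (∀ j, condProb M π j t s = 0) → π.q t s ⟨0, hk s⟩ = 1

/-!
Everything is governed by the state frequencies `F_π(t,s) = ∑_j α(j) P^π(S_t = s | S_0 = j)`,
with `x_π(t,s,a) = F_π(t,s) q(a|s,π_t)`. Conversely, if every row `w_t(s,·)` of a point `w ∈ P`
is a multiple of `q(·|s,π_t)`, the flow constraints force its row sums to be `F_π(t,·)`, so
`w = x_π`.

For deterministic `π`, a point `y ∈ P` on an open segment through `x_π` has support inside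
that of `x_π`, hence is such a `w`, hence equals `x_π`.

For a vertex `x`, the policy `π^x` satisfies `x_{π^x} = x` by the same fact. If `π^x`
randomizes at a reachable `(t,s)`, its row there is a proper convex combination of a point
mass and another distribution; since `x_π` is affine in a single row of `π`, this exhibits
`x` as an interior point of a segment in `P` whose endpoint differs from `x` at `(t,s)`.
Where `F(t,s) = 0` the row of `x` vanishes and `π^x` is the point mass on the first action.
-/

section Simplex

variable {ι : Type*} [Fintype ι] [DecidableEq ι]

theorem eq_single_of_mem_stdSimplex {f : ι → ℝ} (hf : f ∈ stdSimplex ℝ ι) {i : ι}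
    (hi : f i = 1) : f = Pi.single i 1 := by
  have hrest : ∑ j ∈ univ.erase i, f j = 0 := by
    have := add_sum_erase univ f (mem_univ i)
    linarith [hf.2]
  funext j
  rcases eq_or_ne j i with rfl | hj
  · simp [hi]
  · rw [Pi.single_eq_of_ne hj]
    exact (sum_eq_zero_iff_of_nonneg fun l _ => hf.1 l).1 hrest j (mem_erase.2 ⟨hj, mem_univ j⟩)

theorem exists_mem_openSegment_single {f : ι → ℝ} (hf : f ∈ stdSimplex ℝ ι) {i : ι}
    (hi₀ : 0 < f i) (hi₁ : f i < 1) :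
    ∃ g ∈ stdSimplex ℝ ι, f ∈ openSegment ℝ (Pi.single i 1) g := by
  have hne : 1 - f i ≠ 0 := by linarith
  refine ⟨(1 - f i)⁻¹ • (f - f i • Pi.single i 1), ⟨fun j => ?_, ?_⟩,
    f i, 1 - f i, hi₀, by linarith, by ring, ?_⟩
  · rcases eq_or_ne j i with rfl | hj
    · simp
    · simpa [Pi.single_eq_of_ne hj] using mul_nonneg (inv_nonneg.2 (sub_nonneg.2 hi₁.le)) (hf.1 j)
  · simp [← mul_sum, sum_sub_distrib, hf.2, inv_mul_cancel₀ hne]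
  · rw [smul_smul, mul_inv_cancel₀ hne, one_smul, add_sub_cancel]

theorem apply_eq_sum_mul_single {w : ι → ℝ} {i : ι} (hw : ∀ j ≠ i, w j = 0) (j : ι) :
    w j = (∑ l, w l) * (Pi.single i 1 : ι → ℝ) j := by
  rw [sum_eq_single i (fun l _ hl => hw l hl) (by simp)]
  rcases eq_or_ne j i with rfl | hj
  · simp
  · simp [hj, hw j hj]

noncomputable def normalizeOr (i₀ : ι) (w : ι → ℝ) : ι → ℝ :=
  if ∑ i, w i = 0 then Pi.single i₀ 1 else (∑ i, w i)⁻¹ • w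

theorem normalizeOr_of_sum_eq_zero (i₀ : ι) {w : ι → ℝ} (h : ∑ i, w i = 0) :
    normalizeOr i₀ w = Pi.single i₀ 1 :=
  if_pos h

theorem normalizeOr_mem_stdSimplex (i₀ : ι) {w : ι → ℝ} (hw : 0 ≤ w) :
    normalizeOr i₀ w ∈ stdSimplex ℝ ι := by
  unfold normalizeOr
  split_ifs with h
  · exact single_mem_stdSimplex ℝ i₀
  · exact ⟨fun i => mul_nonneg (inv_nonneg.2 (sum_nonneg fun j _ => hw j)) (hw i),
      by simp [← mul_sum, inv_mul_cancel₀ h]⟩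

theorem sum_mul_normalizeOr (i₀ : ι) {w : ι → ℝ} (hw : 0 ≤ w) (i : ι) :
    (∑ j, w j) * normalizeOr i₀ w i = w i := by
  unfold normalizeOr
  split_ifs with h
  · rw [h, zero_mul, eq_comm]
    exact (sum_eq_zero_iff_of_nonneg fun j _ => hw j).1 h i (mem_univ i)
  · simp [h]

end Simplex

namespace Policy

def updateRow (π : Policy N k) (t₀ : ℕ) (s₀ : Fin N) (r : Fin (k s₀) → ℝ)
    (hr : r ∈ stdSimplex ℝ (Fin (k s₀))) : Policy N k where
  q := Function.update π.q t₀ (Function.update (π.q t₀) s₀ r)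
  q_nonneg t s a := by
    rcases eq_or_ne t t₀ with rfl | ht
    · rcases eq_or_ne s s₀ with rfl | hs
      · simpa using hr.1 a
      · simpa [hs] using π.q_nonneg t s a
    · simpa [ht] using π.q_nonneg t s a
  q_sum t s := by
    rcases eq_or_ne t t₀ with rfl | ht
    · rcases eq_or_ne s s₀ with rfl | hs
      · simpa using hr.2
      · simpa [hs] using π.q_sum t s
    · simpa [ht] using π.q_sum t s

variable {π : Policy N k} {t₀ : ℕ} {s₀ : Fin N} {r : Fin (k s₀) → ℝ}
  {hr : r ∈ stdSimplex ℝ (Fin (k s₀))}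

@[simp]
theorem updateRow_q_self : (π.updateRow t₀ s₀ r hr).q t₀ s₀ = r := by
  simp [updateRow]

theorem updateRow_q_of_ne {t : ℕ} {s : Fin N} (h : ¬(t = t₀ ∧ s = s₀)) :
    (π.updateRow t₀ s₀ r hr).q t s = π.q t s := by
  rcases eq_or_ne t t₀ with rfl | ht
  · simp [updateRow, show s ≠ s₀ from fun hs => h ⟨rfl, hs⟩]
  · simp [updateRow, ht]

/-- The policy `π^x`: `x_t(s,·)` normalized, or the first action where `x_t(s,·)` vanishes.
Beyond the last decision epoch the rows of epoch `TT` are reused. -/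
noncomputable def ofFreq {TT : ℕ} (hk : ∀ s, 1 ≤ k s) (x : FreqSpace N k TT)
    (hx : ∀ t s a, 0 ≤ x.1 t s a) : Policy N k where
  q t s := normalizeOr ⟨0, hk s⟩ (x.1 (Fin.clamp t TT) s)
  q_nonneg _ s := (normalizeOr_mem_stdSimplex _ (hx _ s)).1
  q_sum _ s := (normalizeOr_mem_stdSimplex _ (hx _ s)).2

theorem ofFreq_q {TT : ℕ} (hk : ∀ s, 1 ≤ k s) (x : FreqSpace N k TT)
    (hx : ∀ t s a, 0 ≤ x.1 t s a) (t : Fin (TT + 1)) (s : Fin N) :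
    (ofFreq hk x hx).q t s = normalizeOr ⟨0, hk s⟩ (x.1 t s) := by
  have : Fin.clamp t TT = t := Fin.ext (min_eq_left (Nat.lt_succ_iff.1 t.isLt))
  simp only [ofFreq, this]

end Policy

section Frequencies

variable {TT t₀ : ℕ} {s₀ : Fin N} {r₁ r₂ : Fin (k s₀) → ℝ}

def stateFreq (M : MDP N T k) (π : Policy N k) (t : ℕ) (s : Fin N) : ℝ :=
  ∑ j, M.α j * condProb M π j t s

theorem condProb_nonneg (M : MDP N T k) (π : Policy N k) (j : Fin N) (t : ℕ) (s : Fin N) :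
    0 ≤ condProb M π j t s := by
  induction t generalizing s with
  | zero => unfold condProb; positivity
  | succ t ih =>
    exact sum_nonneg fun s' _ => sum_nonneg fun a _ =>
      mul_nonneg (mul_nonneg (ih s') (π.q_nonneg t s' a)) (M.p_nonneg t s' a s)

theorem stateFreq_nonneg (M : MDP N T k) (π : Policy N k) (t : ℕ) (s : Fin N) :
    0 ≤ stateFreq M π t s :=
  sum_nonneg fun j _ => mul_nonneg (M.α_pos j).le (condProb_nonneg M π j t s)

theorem xsa_eq_stateFreq_mul (M : MDP N T k) (π : Policy N k) (t : ℕ) (s : Fin N)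
    (a : Fin (k s)) : xsa M π t s a = stateFreq M π t s * π.q t s a := by
  rw [xsa, stateFreq, sum_mul]

theorem sum_xsa (M : MDP N T k) (π : Policy N k) (t : ℕ) (s : Fin N) :
    ∑ a, xsa M π t s a = stateFreq M π t s := by
  simp only [xsa_eq_stateFreq_mul, ← mul_sum, π.q_sum, mul_one]

theorem stateFreq_zero (M : MDP N T k) (π : Policy N k) (s : Fin N) :
    stateFreq M π 0 s = M.α s := by
  simp [stateFreq, condProb]

theorem stateFreq_succ (M : MDP N T k) (π : Policy N k) (t : ℕ) (j : Fin N) :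
    stateFreq M π (t + 1) j = ∑ s, ∑ a, M.p t s a j * xsa M π t s a := by
  simp only [stateFreq, condProb, xsa, mul_sum]
  rw [sum_comm]
  refine sum_congr rfl fun s _ => ?_
  rw [sum_comm]
  exact sum_congr rfl fun a _ => sum_congr rfl fun i _ => by ring

@[simp]
theorem xvec_fst_apply (M : MDP N (TT + 2) k) (π : Policy N k) (t : Fin (TT + 1)) (s : Fin N)
    (a : Fin (k s)) : (xvec M π).1 t s a = xsa M π t s a :=
  rfl

theorem xvec_mem_Pset (M : MDP N (TT + 2) k) (π : Policy N k) : xvec M π ∈ Pset M :=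
  ⟨fun t s a => by
      simpa [xsa_eq_stateFreq_mul] using mul_nonneg (stateFreq_nonneg M π t s) (π.q_nonneg t s a),
    fun s => stateFreq_nonneg M π (TT + 1) s,
    fun j => (sum_xsa M π 0 j).trans (stateFreq_zero M π j),
    fun t j => (sum_xsa M π _ j).trans (stateFreq_succ M π t j),
    fun j => stateFreq_succ M π TT j⟩

theorem xvec_eq_of_forall_row (M : MDP N (TT + 2) k) (π : Policy N k) {w : FreqSpace N k TT}
    (hw : w ∈ Pset M) (hrow : ∀ t s a, w.1 t s a = (∑ a', w.1 t s a') * π.q t s a) :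
    xvec M π = w := by
  have hxsa : ∀ t : Fin (TT + 1), (∀ s, stateFreq M π t s = ∑ a, w.1 t s a) →
      ∀ s a, xsa M π t s a = w.1 t s a := fun t ht s a => by
    rw [xsa_eq_stateFreq_mul, ht, ← hrow]
  have hfreq : ∀ t : Fin (TT + 1), ∀ s, stateFreq M π t s = ∑ a, w.1 t s a := by
    intro t
    induction t using Fin.induction with
    | zero => exact fun s => (stateFreq_zero M π s).trans (hw.2.2.1 s).symm
    | succ t ih =>
      intro s
      have hprev := hxsa _ ih
      rw [Fin.val_castSucc] at hprev
      rw [hw.2.2.2.1 t s, Fin.val_succ, stateFreq_succ]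
      simp only [hprev]
  refine Prod.ext (funext fun t => funext fun s => funext fun a => hxsa t (hfreq t) s a) ?_
  funext s
  rw [hw.2.2.2.2 s]
  exact (stateFreq_succ M π TT s).trans (by simp only [← hxsa _ (hfreq _), Fin.val_last])

theorem xvec_mem_extremePoints_of_deterministic (M : MDP N (TT + 2) k) {π : Policy N k}
    (hπ : Deterministic k TT π) : xvec M π ∈ (Pset M).extremePoints ℝ := by
  refine mem_extremePoints_iff_left.2 ⟨xvec_mem_Pset M π, fun y hy z hz hseg => ?_⟩
  obtain ⟨c, d, hc, hd, -, hyz⟩ := hseg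
  refine (xvec_eq_of_forall_row M π hy fun t s a => ?_).symm
  obtain ⟨a₀, ha₀⟩ := hπ t s (Nat.lt_succ_iff.1 t.isLt)
  have hq := eq_single_of_mem_stdSimplex ⟨π.q_nonneg t s, π.q_sum t s⟩ ha₀
  rw [hq]
  refine apply_eq_sum_mul_single (fun b hb => ?_) a
  -- `x_π` vanishes at `b` and is a positive combination of `y, z ≥ 0`
  have hsum : c * y.1 t s b + d * z.1 t s b = 0 := by
    have := congrFun (congrFun (congrFun (congrArg Prod.fst hyz) t) s) b
    simpa [xsa_eq_stateFreq_mul, hq, hb] using this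
  have := (add_eq_zero_iff_of_nonneg (mul_nonneg hc.le (hy.1 t s b))
    (mul_nonneg hd.le (hz.1 t s b))).1 hsum
  exact (mul_eq_zero.1 this.1).resolve_left hc.ne'

theorem stateFreq_updateRow_of_le (M : MDP N T k) (π : Policy N k) {r : Fin (k s₀) → ℝ}
    (hr : r ∈ stdSimplex ℝ (Fin (k s₀))) {t : ℕ} (ht : t ≤ t₀) (s : Fin N) :
    stateFreq M (π.updateRow t₀ s₀ r hr) t s = stateFreq M π t s := by
  induction t generalizing s with
  | zero => simp only [stateFreq_zero]
  | succ t ih =>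
    have hq : ∀ s', (π.updateRow t₀ s₀ r hr).q t s' = π.q t s' := fun s' =>
      Policy.updateRow_q_of_ne fun h => by omega
    simp only [stateFreq_succ, xsa_eq_stateFreq_mul, ih (by omega), hq]

theorem xsa_updateRow_mix (M : MDP N T k) (π : Policy N k)
    (hr₁ : r₁ ∈ stdSimplex ℝ (Fin (k s₀))) (hr₂ : r₂ ∈ stdSimplex ℝ (Fin (k s₀))) {a b : ℝ}
    (hmix : a • r₁ + b • r₂ = π.q t₀ s₀) {t : ℕ}
    (hfreq : ∀ s, stateFreq M π t s = a * stateFreq M (π.updateRow t₀ s₀ r₁ hr₁) t s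
      + b * stateFreq M (π.updateRow t₀ s₀ r₂ hr₂) t s) (s : Fin N) (c : Fin (k s)) :
    xsa M π t s c = a * xsa M (π.updateRow t₀ s₀ r₁ hr₁) t s c
      + b * xsa M (π.updateRow t₀ s₀ r₂ hr₂) t s c := by
  simp only [xsa_eq_stateFreq_mul]
  by_cases h : t = t₀ ∧ s = s₀
  · obtain ⟨rfl, rfl⟩ := h
    simp only [stateFreq_updateRow_of_le M π _ le_rfl, Policy.updateRow_q_self, ← hmix,
      Pi.add_apply, Pi.smul_apply, smul_eq_mul]
    ring
  · rw [Policy.updateRow_q_of_ne h, Policy.updateRow_q_of_ne h, hfreq s]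
    ring

theorem stateFreq_updateRow_mix (M : MDP N T k) (π : Policy N k)
    (hr₁ : r₁ ∈ stdSimplex ℝ (Fin (k s₀))) (hr₂ : r₂ ∈ stdSimplex ℝ (Fin (k s₀))) {a b : ℝ}
    (hab : a + b = 1) (hmix : a • r₁ + b • r₂ = π.q t₀ s₀) (t : ℕ) (s : Fin N) :
    stateFreq M π t s = a * stateFreq M (π.updateRow t₀ s₀ r₁ hr₁) t s
      + b * stateFreq M (π.updateRow t₀ s₀ r₂ hr₂) t s := by
  induction t generalizing s with
  | zero => simp only [stateFreq_zero, ← add_mul, hab, one_mul]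
  | succ t ih =>
    simp only [stateFreq_succ, xsa_updateRow_mix M π hr₁ hr₂ hmix ih, mul_sum, ← sum_add_distrib]
    exact sum_congr rfl fun s' _ => sum_congr rfl fun c _ => by ring

theorem xvec_mem_openSegment_updateRow (M : MDP N (TT + 2) k) (π : Policy N k)
    (hr₁ : r₁ ∈ stdSimplex ℝ (Fin (k s₀))) (hr₂ : r₂ ∈ stdSimplex ℝ (Fin (k s₀)))
    (h : π.q t₀ s₀ ∈ openSegment ℝ r₁ r₂) :
    xvec M π ∈ openSegment ℝ (xvec M (π.updateRow t₀ s₀ r₁ hr₁))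
      (xvec M (π.updateRow t₀ s₀ r₂ hr₂)) := by
  obtain ⟨a, b, ha, hb, hab, hmix⟩ := h
  have hfreq := stateFreq_updateRow_mix M π hr₁ hr₂ hab hmix
  refine ⟨a, b, ha, hb, hab, Prod.ext ?_ ?_⟩
  · funext t s c
    exact (xsa_updateRow_mix M π hr₁ hr₂ hmix (hfreq t) s c).symm
  · funext s
    exact (hfreq (TT + 1) s).symm

theorem exists_q_eq_one_of_xvec_mem_extremePoints (M : MDP N (TT + 2) k) {π : Policy N k}
    (hπ : xvec M π ∈ (Pset M).extremePoints ℝ) {t : ℕ} (ht : t ≤ TT) {s : Fin N}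
    (hs : stateFreq M π t s ≠ 0) : ∃ a, π.q t s a = 1 := by
  by_contra! hne
  have hrow : π.q t s ∈ stdSimplex ℝ (Fin (k s)) := ⟨π.q_nonneg t s, π.q_sum t s⟩
  obtain ⟨a, -, ha⟩ := exists_lt_of_sum_lt (s := univ) (f := 0) (g := π.q t s)
    (by simp [π.q_sum])
  have ha₁ : π.q t s a < 1 := (mem_Icc_of_mem_stdSimplex hrow a).2.lt_of_ne (hne a)
  obtain ⟨g, hg, hseg⟩ := exists_mem_openSegment_single hrow ha ha₁
  have heq := hπ.2 (xvec_mem_Pset M _) (xvec_mem_Pset M _)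
    (xvec_mem_openSegment_updateRow M π (single_mem_stdSimplex ℝ a) hg hseg)
  have hxa := congrFun (congrFun (congrFun (congrArg Prod.fst heq) ⟨t, Nat.lt_succ_of_le ht⟩) s) a
  simp only [xvec_fst_apply, xsa_eq_stateFreq_mul, stateFreq_updateRow_of_le M π _ le_rfl,
    Policy.updateRow_q_self, Pi.single_eq_same, mul_one] at hxa
  exact hne a (mul_left_cancel₀ hs (hxa.symm.trans (mul_one _).symm))

theorem xvec_ofFreq (M : MDP N (TT + 2) k) (hk : ∀ s, 1 ≤ k s) {x : FreqSpace N k TT}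
    (hx : x ∈ Pset M) : xvec M (Policy.ofFreq hk x hx.1) = x :=
  xvec_eq_of_forall_row M _ hx fun t s a => by
    rw [Policy.ofFreq_q, sum_mul_normalizeOr _ (hx.1 t s)]

theorem ofFreq_q_eq_one_of_stateFreq_eq_zero (M : MDP N (TT + 2) k) (hk : ∀ s, 1 ≤ k s)
    {x : FreqSpace N k TT} (hx : x ∈ Pset M) {t : ℕ} (ht : t ≤ TT) {s : Fin N}
    (h : stateFreq M (Policy.ofFreq hk x hx.1) t s = 0) :
    (Policy.ofFreq hk x hx.1).q t s ⟨0, hk s⟩ = 1 := by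
  set t' : Fin (TT + 1) := ⟨t, Nat.lt_succ_of_le ht⟩
  have hsum : ∑ a, x.1 t' s a = 0 := by
    have hxsa a := congrFun (congrFun (congrFun (congrArg Prod.fst (xvec_ofFreq M hk hx)) t') s) a
    rw [← h, ← sum_xsa]
    exact sum_congr rfl fun a _ => (hxsa a).symm
  have hq := Policy.ofFreq_q hk x hx.1 t' s
  rw [normalizeOr_of_sum_eq_zero _ hsum] at hq
  simpa using congrFun hq ⟨0, hk s⟩

end Frequencies

theorem deterministic_iff_vertex_general (N TT : ℕ) (k : Fin N → ℕ) (hk : ∀ s, 1 ≤ k s)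
    (M : MDP N (TT+2) k) :
    (∀ π : Policy N k, Deterministic k TT π →
        xvec M π ∈ Set.extremePoints ℝ (Pset M)) ∧
      (∀ x ∈ Set.extremePoints ℝ (Pset M), ∃ π : Policy N k,
        RegularPol M hk π ∧ Deterministic k TT π ∧ xvec M π = x) := by
  refine ⟨fun π hπ => xvec_mem_extremePoints_of_deterministic M hπ, fun x hx => ?_⟩
  set π := Policy.ofFreq hk x hx.1.1
  have hxπ : xvec M π = x := xvec_ofFreq M hk hx.1
  refine ⟨π, fun t s ht hunreach => ?_, fun t s ht => ?_, hxπ⟩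
  · exact ofFreq_q_eq_one_of_stateFreq_eq_zero M hk hx.1 ht
      (sum_eq_zero fun j _ => by rw [hunreach j, mul_zero])
  · by_cases hs : stateFreq M π t s = 0
    · exact ⟨_, ofFreq_q_eq_one_of_stateFreq_eq_zero M hk hx.1 ht hs⟩
    · exact exists_q_eq_one_of_xvec_mem_extremePoints M (hxπ ▸ hx) ht hs

/-- for a regular process, deterministic policies map to vertices (extreme
points) of the state-action frequency polytope, and conversely every vertex arises as
`x_π` for a (regular) deterministic policy `π = π^x`. -/
theorem deterministic_iff_vertex (N TT : ℕ) (k : Fin N → ℕ) (hk : ∀ s, 1 ≤ k s)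
    (M : MDP N (TT+2) k) (hreg : RegularProcess M) :
    (∀ π : Policy N k, Deterministic k TT π →
        xvec M π ∈ Set.extremePoints ℝ (Pset M)) ∧
      (∀ x ∈ Set.extremePoints ℝ (Pset M), ∃ π : Policy N k,
        RegularPol M hk π ∧ Deterministic k TT π ∧ xvec M π = x) :=
  deterministic_iff_vertex_general N TT k hk M
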